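/- arXiv:2109.08467 — 4 statements merged into one kernel-verified Lean document; each statement's English description precedes it below -/
import Mathlib

section
/- Let A be a finite index set with |A| = d ≥ 1, and let (Y_i)_{i∈A} be mutually independent real-valued random variables on a probability space, where Y_i is Gaussian with mean θ_i and variance σ_i² satisfying σ_i² ≤ 1 for every i ∈ A. Let I be a nonempty finite family of nonempty subsets of A. Define f(a) := E[max_{i∈a} Y_i] and g(a) := max_{i∈a} θ_i for a ∈ I. If a* ∈ I minimizes f over I and ã* ∈ I minimizes g over I, then f(ã*) − f(a*) ≤ √(2 log d). -/
/-!
For every admissible `a` we have `g a ≤ f a ≤ g a + √(2 log d)`. The lower bound is Jensen's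
inequality for the maximum. For the upper bound, `Y i - θ i` is sub-Gaussian with parameter
`σ_i² ≤ 1`; for every `t`, Jensen for `exp` and `exp (t max) ≤ ∑ exp (t Y_i)` give
`t E[max (Y - θ)] ≤ log |a| + t² / 2`, and optimizing over `t > 0` yields `√(2 log |a|)`.
Then `f ã ≤ g ã + √(2 log d) ≤ g a* + √(2 log d) ≤ f a* + √(2 log d)`.
-/

open MeasureTheory ProbabilityTheory Real
open scoped NNReal

lemma le_sqrt_two_mul_of_forall_mul_le {x c L : ℝ} (hc : 0 ≤ c)
    (h : ∀ t > 0, t * x ≤ L + c * t ^ 2 / 2) : x ≤ √(2 * c * L) := by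
  rcases le_or_gt x 0 with hx | hx
  · exact hx.trans (sqrt_nonneg _)
  rcases hc.eq_or_lt with rfl | hc
  · have := h ((|L| + 1) / x) (by positivity)
    rw [div_mul_cancel₀ _ hx.ne'] at this
    linarith [le_abs_self L]
  · refine le_sqrt_of_sq_le ?_
    -- `t = x / c` maximizes `t * x - c * t ^ 2 / 2`
    have := h (x / c) (by positivity)
    field_simp at this
    nlinarith

lemma exp_integral_le_integral_exp {Ω : Type*} [MeasurableSpace Ω] {μ : Measure Ω}
    [IsProbabilityMeasure μ] {Z : Ω → ℝ} (hZ : Integrable Z μ)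
    (hexp : Integrable (fun ω ↦ exp (Z ω)) μ) :
    exp (∫ ω, Z ω ∂μ) ≤ ∫ ω, exp (Z ω) ∂μ :=
  convexOn_exp.map_integral_le continuous_exp.continuousOn isClosed_univ
    (.of_forall fun _ ↦ Set.mem_univ _) hZ hexp

lemma exp_mul_sup'_le_sum {ι : Type*} {s : Finset ι} (hs : s.Nonempty) (t : ℝ) (x : ι → ℝ) :
    exp (t * s.sup' hs x) ≤ ∑ i ∈ s, exp (t * x i) := by
  obtain ⟨i, hi, hsup⟩ := Finset.exists_mem_eq_sup' hs x
  rw [hsup]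
  exact Finset.single_le_sum (fun j _ ↦ (exp_pos (t * x j)).le) hi

namespace ProbabilityTheory.HasSubgaussianMGF

variable {Ω : Type*} [MeasurableSpace Ω] {μ : Measure Ω} {X : Ω → ℝ}

lemma mono {c d : ℝ≥0} (h : HasSubgaussianMGF X c μ) (hcd : c ≤ d) :
    HasSubgaussianMGF X d μ where
  integrable_exp_mul := h.integrable_exp_mul
  mgf_le t := (h.mgf_le t).trans (exp_le_exp.2 (by gcongr))

lemma integrable_of_sub [IsFiniteMeasure μ] {c : ℝ≥0} {m : ℝ}
    (h : HasSubgaussianMGF (fun ω ↦ X ω - m) c μ) : Integrable X μ :=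
  (h.integrable.add (integrable_const m)).congr (.of_forall fun ω ↦ by simp)

lemma sub_of_hasLaw_gaussianReal [IsProbabilityMeasure μ] {m : ℝ} {v : ℝ≥0}
    (hX : HasLaw X (gaussianReal m v) μ) : HasSubgaussianMGF (fun ω ↦ X ω - m) v μ := by
  have hlaw := gaussianReal_sub_const hX m
  rw [sub_self] at hlaw
  exact
    { integrable_exp_mul t := by
        rw [← mgf_pos_iff, mgf_gaussianReal hlaw.map_eq]
        positivity
      mgf_le t := by simp [mgf_gaussianReal hlaw.map_eq] }

end ProbabilityTheory.HasSubgaussianMGF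

section MaximalInequality

variable {Ω ι : Type*} [MeasurableSpace Ω] {μ : Measure Ω} {s : Finset ι} (hs : s.Nonempty)
  {X : ι → Ω → ℝ}
include hs

lemma integrable_finset_sup' (hX : ∀ i ∈ s, Integrable (X i) μ) :
    Integrable (fun ω ↦ s.sup' hs fun i ↦ X i ω) μ := by
  simp_rw [← Finset.sup'_apply]
  exact Finset.sup'_induction (p := (Integrable · μ)) hs X (fun _ h₁ _ h₂ ↦ h₁.sup h₂) hX

lemma sup'_integral_le_integral_sup' (hX : ∀ i ∈ s, Integrable (X i) μ) :
    (s.sup' hs fun i ↦ ∫ ω, X i ω ∂μ) ≤ ∫ ω, s.sup' hs (fun i ↦ X i ω) ∂μ :=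
  Finset.sup'_le hs _ fun i hi ↦ integral_mono (hX i hi) (integrable_finset_sup' hs hX)
    fun ω ↦ Finset.le_sup' (fun j ↦ X j ω) hi

variable [IsProbabilityMeasure μ] {c : ℝ≥0}

lemma mul_integral_sup'_le_log_card_add (hX : ∀ i ∈ s, HasSubgaussianMGF (X i) c μ) (t : ℝ) :
    t * ∫ ω, s.sup' hs (fun i ↦ X i ω) ∂μ ≤ log s.card + c * t ^ 2 / 2 := by
  set M := fun ω ↦ s.sup' hs fun i ↦ X i ω
  have hM : Integrable M μ := integrable_finset_sup' hs fun i hi ↦ (hX i hi).integrable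
  have hsum : Integrable (fun ω ↦ ∑ i ∈ s, exp (t * X i ω)) μ :=
    integrable_finsetSum s fun i hi ↦ (hX i hi).integrable_exp_mul t
  have hexpM : Integrable (fun ω ↦ exp (t * M ω)) μ :=
    hsum.mono' (continuous_exp.comp_aestronglyMeasurable (hM.1.const_mul t))
      (.of_forall fun ω ↦ by
        rw [Real.norm_of_nonneg (exp_pos _).le]
        exact exp_mul_sup'_le_sum hs t _)
  have hcard : (0 : ℝ) < s.card := by exact_mod_cast hs.card_pos
  rw [← exp_le_exp, exp_add, exp_log hcard]
  calc exp (t * ∫ ω, M ω ∂μ) = exp (∫ ω, t * M ω ∂μ) := by rw [integral_const_mul]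
    _ ≤ ∫ ω, exp (t * M ω) ∂μ := exp_integral_le_integral_exp (hM.const_mul t) hexpM
    _ ≤ ∫ ω, ∑ i ∈ s, exp (t * X i ω) ∂μ :=
        integral_mono hexpM hsum fun ω ↦ exp_mul_sup'_le_sum hs t _
    _ = ∑ i ∈ s, mgf (X i) μ t :=
        integral_finsetSum s fun i hi ↦ (hX i hi).integrable_exp_mul t
    _ ≤ ∑ _i ∈ s, exp (c * t ^ 2 / 2) := Finset.sum_le_sum fun i hi ↦ (hX i hi).mgf_le t
    _ = s.card * exp (c * t ^ 2 / 2) := by rw [Finset.sum_const, nsmul_eq_mul]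

theorem integral_sup'_le_sqrt_two_mul_log_card (hX : ∀ i ∈ s, HasSubgaussianMGF (X i) c μ) :
    ∫ ω, s.sup' hs (fun i ↦ X i ω) ∂μ ≤ √(2 * c * log s.card) :=
  le_sqrt_two_mul_of_forall_mul_le c.coe_nonneg fun t _ ↦
    mul_integral_sup'_le_log_card_add hs hX t

theorem integral_sup'_le_sup'_add_sqrt {m : ι → ℝ}
    (hX : ∀ i ∈ s, HasSubgaussianMGF (fun ω ↦ X i ω - m i) c μ) :
    ∫ ω, s.sup' hs (fun i ↦ X i ω) ∂μ ≤ s.sup' hs m + √(2 * c * log s.card) := by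
  have hint : ∀ i ∈ s, Integrable (X i) μ := fun i hi ↦ (hX i hi).integrable_of_sub
  have hcentered := integrable_finset_sup' hs fun i hi ↦ (hX i hi).integrable
  calc ∫ ω, s.sup' hs (fun i ↦ X i ω) ∂μ
      ≤ ∫ ω, s.sup' hs m + s.sup' hs (fun i ↦ X i ω - m i) ∂μ := by
        refine integral_mono (integrable_finset_sup' hs hint)
          ((integrable_const _).add hcentered) fun ω ↦ Finset.sup'_le hs _ fun i hi ↦ ?_
        have := add_le_add (Finset.le_sup' m hi) (Finset.le_sup' (fun j ↦ X j ω - m j) hi)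
        simpa using this
    _ = s.sup' hs m + ∫ ω, s.sup' hs (fun i ↦ X i ω - m i) ∂μ := by
        rw [integral_add (integrable_const _) hcentered, integral_const, probReal_univ, one_smul]
    _ ≤ s.sup' hs m + √(2 * c * log s.card) := by
        grw [integral_sup'_le_sqrt_two_mul_log_card hs hX]

end MaximalInequality

theorem approx_optimal_arm_difference_general
    {Ω : Type*} [MeasurableSpace Ω] (P : Measure Ω) [IsProbabilityMeasure P]
    {A : Type*} [Fintype A] (d : ℕ) (hcard : Fintype.card A = d)
    (Y : A → Ω → ℝ) (θ : A → ℝ) (σ2 : A → NNReal)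
    (hσ : ∀ i, (σ2 i : ℝ) ≤ 1)
    (hY : ∀ i, Measure.map (Y i) P = gaussianReal (θ i) (σ2 i))
    (I : Finset (Finset A))
    (hne : ∀ a ∈ I, a.Nonempty)
    (f g : Finset A → ℝ)
    (hf : ∀ a (ha : a ∈ I), f a = ∫ ω, a.sup' (hne a ha) (fun i => Y i ω) ∂P)
    (hg : ∀ a (ha : a ∈ I), g a = a.sup' (hne a ha) θ)
    (astar : Finset A) (hastar : astar ∈ I)
    (atil : Finset A) (hatil : atil ∈ I) (hatil_min : ∀ b ∈ I, g atil ≤ g b) :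
    f atil - f astar ≤ Real.sqrt (2 * Real.log d) := by
  have hlaw : ∀ i, HasLaw (Y i) (gaussianReal (θ i) (σ2 i)) P := fun i ↦
    ⟨aemeasurable_of_map_neZero (by rw [hY i]; infer_instance), hY i⟩
  have hsub : ∀ i, HasSubgaussianMGF (fun ω ↦ Y i ω - θ i) 1 P := fun i ↦
    (HasSubgaussianMGF.sub_of_hasLaw_gaussianReal (hlaw i)).mono (by exact_mod_cast hσ i)
  have hupper : f atil ≤ g atil + √(2 * log d) := by
    rw [hf atil hatil, hg atil hatil]
    grw [integral_sup'_le_sup'_add_sqrt _ fun i _ ↦ hsub i]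
    have hcard_le : (atil.card : ℝ) ≤ d := by exact_mod_cast hcard ▸ atil.card_le_univ
    rw [NNReal.coe_one, mul_one]
    gcongr
  have hlower : g astar ≤ f astar := by
    have hmean : ∀ i, ∫ ω, Y i ω ∂P = θ i := fun i ↦
      (hlaw i).integral_eq.trans integral_id_gaussianReal
    rw [hf astar hastar, hg astar hastar]
    simpa only [hmean] using
      sup'_integral_le_integral_sup' (hne astar hastar) fun i _ ↦ (hsub i).integrable_of_sub
  linarith [hatil_min astar hastar]

/-- **Theorem 2 of the paper.** The exact objective `f` (expected maximum of Gaussian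
feedbacks), evaluated at the minimizer of the approximate objective `g` (maximum of
the means), exceeds the exact optimum by at most `√(2 log d)`. -/
theorem approx_optimal_arm_difference
    {Ω : Type*} [MeasurableSpace Ω] (P : Measure Ω) [IsProbabilityMeasure P]
    {A : Type*} [Fintype A] (d : ℕ) (hd : 1 ≤ d) (hcard : Fintype.card A = d)
    (Y : A → Ω → ℝ) (θ : A → ℝ) (σ2 : A → NNReal)
    (hσ : ∀ i, (σ2 i : ℝ) ≤ 1)
    (hindep : iIndepFun Y P)
    (hY : ∀ i, Measure.map (Y i) P = gaussianReal (θ i) (σ2 i))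
    (I : Finset (Finset A)) (hInonempty : I.Nonempty)
    (hne : ∀ a ∈ I, a.Nonempty)
    (f g : Finset A → ℝ)
    (hf : ∀ a (ha : a ∈ I), f a = ∫ ω, a.sup' (hne a ha) (fun i => Y i ω) ∂P)
    (hg : ∀ a (ha : a ∈ I), g a = a.sup' (hne a ha) θ)
    (astar : Finset A) (hastar : astar ∈ I) (hastar_min : ∀ b ∈ I, f astar ≤ f b)
    (atil : Finset A) (hatil : atil ∈ I) (hatil_min : ∀ b ∈ I, g atil ≤ g b) :
    f atil - f astar ≤ Real.sqrt (2 * Real.log d) :=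
  approx_optimal_arm_difference_general P d hcard Y θ σ2 hσ hY I hne f g hf hg astar hastar atil
    hatil hatil_min
end

section
/- Let a be a finite nonempty index set, and let (Y_i)_{i∈a} and (Z_i)_{i∈a} be two families of real-valued random variables on a probability space, each family mutually independent, where Y_i is Gaussian with mean θ_i and variance σ_i² and Z_i is Gaussian with mean θ̂_i and the same variance σ_i², for every i ∈ a. Then |E[max_{i∈a} Y_i] − E[max_{i∈a} Z_i]| ≤ 2 · max_{i∈a} |θ_i − θ̂_i|. -/
/-! The expected maximum of an independent family depends only on the marginal laws, so shifting
each `Y i` by `θ i - θhat i` yields a family with the same expected maximum as `Z`. The maximum is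
`1`-Lipschitz for the sup-distance, hence that shift moves the maximum pointwise by at most
`max_i |θ i - θhat i|`, and hence so does the expectation. -/

open MeasureTheory ProbabilityTheory

lemma Finset.abs_sup'_sub_sup'_le {ι α : Type*} [AddCommGroup α] [LinearOrder α]
    [IsOrderedAddMonoid α] {s : Finset ι} (H : s.Nonempty) (f g : ι → α) :
    |s.sup' H f - s.sup' H g| ≤ s.sup' H fun i => |f i - g i| := by
  have key : ∀ f g : ι → α, s.sup' H f ≤ s.sup' H g + s.sup' H fun i => |f i - g i| :=
    fun f g => Finset.sup'_le _ _ fun i hi => calc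
      f i = g i + (f i - g i) := (add_sub_cancel _ _).symm
      _ ≤ _ := add_le_add (s.le_sup' g hi)
        ((le_abs_self _).trans (s.le_sup' (fun i => |f i - g i|) hi))
  rw [abs_sub_le_iff, sub_le_iff_le_add', sub_le_iff_le_add']
  refine ⟨key f g, ?_⟩
  simpa only [abs_sub_comm] using key g f

lemma MeasureTheory.Integrable.finset_sup'_apply {α β ι : Type*} {_ : MeasurableSpace α}
    {μ : Measure α} [NormedAddCommGroup β] [Lattice β] [HasSolidNorm β] [IsOrderedAddMonoid β]
    {s : Finset ι} (H : s.Nonempty) {f : ι → α → β}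
    (hf : ∀ i ∈ s, Integrable (f i) μ) :
    Integrable (fun a => s.sup' H fun i => f i a) μ := by
  convert Finset.sup'_induction (p := fun g => Integrable g μ) H f
    (fun _ hg _ hh => hg.sup hh) hf
  exact (Finset.sup'_apply H f _).symm

namespace ProbabilityTheory

variable {Ω : Type*} {_ : MeasurableSpace Ω} {P : Measure Ω}

lemma hasLaw_of_map_eq {E : Type*} {_ : MeasurableSpace E} {X : Ω → E} {μ : Measure E}
    [NeZero μ] (h : P.map X = μ) : HasLaw X μ P :=
  ⟨.of_map_ne_zero (h ▸ NeZero.ne μ), h⟩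

lemma HasLaw.integrable {E : Type*} [NormedAddCommGroup E] {_ : MeasurableSpace E} {X : Ω → E}
    {μ : Measure E} (hX : HasLaw X μ P) (hμ : Integrable id μ) : Integrable X P := by
  rw [← hX.map_eq] at hμ
  exact hμ.comp_aemeasurable hX.aemeasurable

lemma hasLaw_sub_const_gaussianReal (m c : ℝ) (v : NNReal) :
    HasLaw (· - c) (gaussianReal (m - c) v) (gaussianReal m v) :=
  ⟨(measurable_sub_const c).aemeasurable, gaussianReal_map_sub_const c⟩

lemma iIndepFun.integral_comp_eq_integral_pi {ι : Type*} [Fintype ι] {𝓧 : ι → Type*}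
    {_ : ∀ i, MeasurableSpace (𝓧 i)} {μ : ∀ i, Measure (𝓧 i)} {X : ∀ i, Ω → 𝓧 i}
    (hind : iIndepFun X P) (hX : ∀ i, HasLaw (X i) (μ i) P)
    {f : (∀ i, 𝓧 i) → ℝ} (hf : Measurable f) :
    ∫ ω, f (fun i => X i ω) ∂P = ∫ x, f x ∂Measure.pi μ :=
  (hind.hasLaw_pi hX).integral_comp hf.aestronglyMeasurable

end ProbabilityTheory

/-- **Lemma 3 of the paper.** The difference between the expected maximum under the true
means and under the estimated means is bounded by twice the largest per-coordinate
mean error. -/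
theorem expected_max_mean_perturbation
    {Ω : Type*} [MeasurableSpace Ω] (P : Measure Ω) [IsProbabilityMeasure P]
    {ι : Type*} [Fintype ι] [Nonempty ι]
    (Y Z : ι → Ω → ℝ) (θ θhat : ι → ℝ) (σ2 : ι → NNReal)
    (hYindep : iIndepFun Y P)
    (hZindep : iIndepFun Z P)
    (hY : ∀ i, Measure.map (Y i) P = gaussianReal (θ i) (σ2 i))
    (hZ : ∀ i, Measure.map (Z i) P = gaussianReal (θhat i) (σ2 i)) :
    |(∫ ω, Finset.univ.sup' Finset.univ_nonempty (fun i => Y i ω) ∂P) -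
      ∫ ω, Finset.univ.sup' Finset.univ_nonempty (fun i => Z i ω) ∂P| ≤
      2 * Finset.univ.sup' Finset.univ_nonempty (fun i => |θ i - θhat i|) := by
  set M := Finset.univ.sup' Finset.univ_nonempty fun i => |θ i - θhat i|
  set W : ι → Ω → ℝ := fun i ω => Y i ω - (θ i - θhat i)
  have hYlaw i : HasLaw (Y i) (gaussianReal (θ i) (σ2 i)) P := hasLaw_of_map_eq (hY i)
  have hWlaw i : HasLaw (W i) (gaussianReal (θhat i) (σ2 i)) P := by
    have h := (hasLaw_sub_const_gaussianReal (θ i) (θ i - θhat i) (σ2 i)).comp (hYlaw i)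
    rwa [sub_sub_cancel] at h
  have hWindep : iIndepFun W P := hYindep.comp _ fun i => measurable_sub_const _
  have hmax : Measurable fun x : ι → ℝ => Finset.univ.sup' Finset.univ_nonempty x := by
    fun_prop
  have hZW : ∫ ω, Finset.univ.sup' Finset.univ_nonempty (fun i => Z i ω) ∂P
      = ∫ ω, Finset.univ.sup' Finset.univ_nonempty (fun i => W i ω) ∂P := by
    rw [hZindep.integral_comp_eq_integral_pi (fun i => hasLaw_of_map_eq (hZ i)) hmax,
      hWindep.integral_comp_eq_integral_pi hWlaw hmax]
  have hint {V : ι → Ω → ℝ} {m : ι → ℝ}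
      (hV : ∀ i, HasLaw (V i) (gaussianReal (m i) (σ2 i)) P) :
      Integrable (fun ω => Finset.univ.sup' Finset.univ_nonempty fun i => V i ω) P :=
    .finset_sup'_apply _ fun i _ => (hV i).integrable IsGaussian.integrable_id
  have hM : 0 ≤ M :=
    (abs_nonneg _).trans <|
      Finset.le_sup' (fun i => |θ i - θhat i|) (Finset.mem_univ (Classical.arbitrary ι))
  rw [hZW, ← integral_sub (hint hYlaw) (hint hWlaw), ← Real.norm_eq_abs]
  calc _ ≤ M * P.real Set.univ := norm_integral_le_of_norm_le_const <| .of_forall fun ω => by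
          simpa only [W, sub_sub_cancel, Real.norm_eq_abs] using
            Finset.abs_sup'_sub_sup'_le Finset.univ_nonempty (fun i => Y i ω) (fun i => W i ω)
    _ ≤ 2 * M := by rw [probReal_univ, mul_one]; linarith
end

section
/- Let Z be a real-valued random variable whose law is the Gaussian measure N(0, v) with 0 < v ≤ 1, and let c ≥ 0. Then the conditional expectation E[|Z| − c | |Z| > c] is at most 1, where the conditional expectation given the event {|Z| > c} (which has positive probability) is defined as E[(|Z| − c)·1_{|Z|>c}] / P(|Z| > c). -/
/-!
By symmetry both numerator and denominator are twice the corresponding integrals over `(c, ∞)`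
against the density `φ` of `N(0, v)`. Since `(-v φ)' = x φ`, the numerator integral is
`v φ(c) - c ∫_c^∞ φ`, so the claim is the Mills-type bound `v φ(c) ≤ (1 + c) ∫_c^∞ φ`, obtained by
comparing `φ` with the derivative of `-v φ(x) / (1 + x)`.
-/

open MeasureTheory ProbabilityTheory Real Set Filter Topology

namespace ProbabilityTheory

variable {μ : ℝ} {v : NNReal}

lemma gaussianPDFReal_zero_abs (x : ℝ) : gaussianPDFReal 0 v |x| = gaussianPDFReal 0 v x := by
  simp [gaussianPDFReal, sq_abs]

lemma hasDerivAt_gaussianPDFReal (x : ℝ) :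
    HasDerivAt (gaussianPDFReal μ v) (-((x - μ) / v) * gaussianPDFReal μ v x) x := by
  have hexp : HasDerivAt (fun x => -(x - μ) ^ 2 / (2 * (v : ℝ))) (-((x - μ) / v)) x := by
    refine ((((hasDerivAt_id x).sub_const μ).pow 2).neg.div_const (2 * (v : ℝ))).congr_deriv ?_
    simp only [id, Nat.cast_ofNat]
    ring
  rw [gaussianPDFReal_def]
  exact (hexp.exp.const_mul _).congr_deriv (by ring)

lemma tendsto_gaussianPDFReal_atTop : Tendsto (gaussianPDFReal μ v) atTop (𝓝 0) := by
  rcases eq_or_ne v 0 with rfl | hv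
  · rw [gaussianPDFReal_zero_var]
    exact tendsto_const_nhds
  have hexp : Tendsto (fun x : ℝ => -(x - μ) ^ 2 / (2 * (v : ℝ))) atTop atBot := by
    refine Tendsto.atBot_div_const (by positivity) (tendsto_neg_atTop_atBot.comp ?_)
    exact (tendsto_pow_atTop two_ne_zero).comp (tendsto_atTop_add_const_right _ _ tendsto_id)
  rw [gaussianPDFReal_def, ← mul_zero (√(2 * π * v))⁻¹]
  exact (tendsto_exp_atBot.comp hexp).const_mul _

lemma hasDerivAt_neg_mul_gaussianPDFReal (x : ℝ) :
    HasDerivAt (fun x => -(v : ℝ) * gaussianPDFReal μ v x)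
      ((x - μ) * gaussianPDFReal μ v x) x := by
  rcases eq_or_ne v 0 with rfl | hv
  · simpa using hasDerivAt_const x (0 : ℝ)
  refine (hasDerivAt_gaussianPDFReal x).const_mul _ |>.congr_deriv ?_
  field_simp

lemma integral_Ioi_sub_mul_gaussianPDFReal {c : ℝ} (hc : μ ≤ c) :
    ∫ x in Ioi c, (x - μ) * gaussianPDFReal μ v x = v * gaussianPDFReal μ v c := by
  rw [integral_Ioi_of_hasDerivAt_of_nonneg' (fun x _ => hasDerivAt_neg_mul_gaussianPDFReal x)
    (fun x hx => mul_nonneg (by linarith [hx.out]) (gaussianPDFReal_nonneg μ v x))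
    (by simpa using tendsto_gaussianPDFReal_atTop.const_mul (-(v : ℝ)))]
  ring

lemma integrableOn_Ioi_sub_mul_gaussianPDFReal {c : ℝ} (hc : μ ≤ c) :
    IntegrableOn (fun x => (x - μ) * gaussianPDFReal μ v x) (Ioi c) :=
  integrableOn_Ioi_deriv_of_nonneg' (fun x _ => hasDerivAt_neg_mul_gaussianPDFReal x)
    (fun x hx => mul_nonneg (by linarith [hx.out]) (gaussianPDFReal_nonneg μ v x))
    (by simpa using tendsto_gaussianPDFReal_atTop.const_mul (-(v : ℝ)))

lemma mul_gaussianPDFReal_div_le_integral_Ioi {c : ℝ} (hc : 0 ≤ c) (hvc : (v : ℝ) ≤ 1 + c) :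
    v * gaussianPDFReal 0 v c / (1 + c) ≤ ∫ x in Ioi c, gaussianPDFReal 0 v x := by
  set φ := gaussianPDFReal 0 v
  -- `x ↦ -v φ(x) / (1 + x)` has derivative `φ(x) (x² + x + v) / (1 + x)²`, which is at most `φ(x)`
  -- as soon as `v ≤ 1 + x`.
  have hderiv : ∀ x ∈ Ici c, HasDerivAt (fun x => -(v : ℝ) * φ x / (1 + x))
      (φ x * (x ^ 2 + x + v) / (1 + x) ^ 2) x := by
    intro x hx
    have hx1 : 1 + x ≠ 0 := by linarith [hx.out]
    refine ((hasDerivAt_neg_mul_gaussianPDFReal x).div ((hasDerivAt_id x).const_add 1) hx1)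
      |>.congr_deriv ?_
    simp only [id]
    field_simp
    ring
  have hnonneg : ∀ x ∈ Ioi c, 0 ≤ φ x * (x ^ 2 + x + v) / (1 + x) ^ 2 := fun x hx => by
    have hφ : 0 ≤ φ x := gaussianPDFReal_nonneg 0 v x
    have hx0 : 0 ≤ x := hc.trans hx.out.le
    positivity
  have htendsto : Tendsto (fun x => -(v : ℝ) * φ x / (1 + x)) atTop (𝓝 0) := by
    simpa only [div_eq_mul_inv, mul_zero, Function.comp_def, id] using
      (tendsto_gaussianPDFReal_atTop.const_mul (-(v : ℝ))).mul
        (tendsto_inv_atTop_zero.comp (tendsto_atTop_add_const_left atTop 1 tendsto_id))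
  calc v * φ c / (1 + c) = ∫ x in Ioi c, φ x * (x ^ 2 + x + v) / (1 + x) ^ 2 := by
        rw [integral_Ioi_of_hasDerivAt_of_nonneg' hderiv hnonneg htendsto]
        ring
    _ ≤ ∫ x in Ioi c, φ x := by
        refine setIntegral_mono_on (integrableOn_Ioi_deriv_of_nonneg' hderiv hnonneg htendsto)
          (integrable_gaussianPDFReal 0 v).integrableOn measurableSet_Ioi fun x hx => ?_
        have hx0 : 0 ≤ x := hc.trans hx.out.le
        have hφ : 0 ≤ φ x := gaussianPDFReal_nonneg 0 v x
        rw [div_le_iff₀ (by positivity)]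
        nlinarith [mul_nonneg hφ (by linarith [hx.out] : (0 : ℝ) ≤ 1 + x - v)]

lemma integral_Ioi_sub_mul_gaussianPDFReal_le {c : ℝ} (hc : 0 ≤ c) (hvc : (v : ℝ) ≤ 1 + c) :
    ∫ x in Ioi c, (x - c) * gaussianPDFReal 0 v x ≤ ∫ x in Ioi c, gaussianPDFReal 0 v x := by
  have hmills := mul_gaussianPDFReal_div_le_integral_Ioi hc hvc
  rw [div_le_iff₀ (by linarith)] at hmills
  have hsplit : ∀ x, (x - c) * gaussianPDFReal 0 v x
      = (x - 0) * gaussianPDFReal 0 v x - c * gaussianPDFReal 0 v x := fun x => by ring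
  simp_rw [hsplit]
  rw [integral_sub (integrableOn_Ioi_sub_mul_gaussianPDFReal hc)
    ((integrable_gaussianPDFReal 0 v).integrableOn.const_mul c), integral_const_mul,
    integral_Ioi_sub_mul_gaussianPDFReal hc]
  linarith

lemma integral_gaussianReal_indicator_lt_abs {c : ℝ} (hv : v ≠ 0) (hc : 0 ≤ c) (h : ℝ → ℝ) :
    ∫ x, {x | c < |x|}.indicator (fun x => h |x|) x ∂gaussianReal 0 v
      = 2 * ∫ x in Ioi c, h x * gaussianPDFReal 0 v x := by
  have hfold : ∀ x, gaussianPDFReal 0 v x • {x | c < |x|}.indicator (fun x => h |x|) x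
      = (Ioi c).indicator (fun x => h x * gaussianPDFReal 0 v x) |x| := fun x => by
    by_cases hx : c < |x|
    · simp [hx, gaussianPDFReal_zero_abs, mul_comm]
    · simp [hx]
  rw [integral_gaussianReal_eq_integral_smul hv, funext hfold, integral_comp_abs,
    setIntegral_indicator measurableSet_Ioi, Ioi_inter_Ioi, max_eq_right hc]

end ProbabilityTheory

/-- **Lemma 5 of the paper.** The expected overshoot of a zero-mean Gaussian with
variance at most 1 beyond a nonnegative threshold, conditional on exceeding the
threshold in absolute value, is at most 1. -/
theorem gaussian_conditional_overshoot_le_one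
    {Ω : Type*} [MeasurableSpace Ω] (P : Measure Ω) [IsProbabilityMeasure P]
    (Z : Ω → ℝ) (v : NNReal) (hv0 : 0 < v) (hv1 : (v : ℝ) ≤ 1)
    (hZ : Measure.map Z P = gaussianReal 0 v) (c : ℝ) (hc : 0 ≤ c) :
    (∫ ω, (|Z ω| - c) * Set.indicator {ω | |Z ω| > c} (fun _ => (1 : ℝ)) ω ∂P) /
      (P {ω | |Z ω| > c}).toReal ≤ 1 := by
  have hZm : AEMeasurable Z P := aemeasurable_of_map_neZero (by rw [hZ]; infer_instance)
  have hS : MeasurableSet {x : ℝ | c < |x|} := measurableSet_lt measurable_const measurable_abs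
  have hnum : ∫ ω, (|Z ω| - c) * {ω | |Z ω| > c}.indicator (fun _ => (1 : ℝ)) ω ∂P
      = 2 * ∫ x in Ioi c, (x - c) * gaussianPDFReal 0 v x := by
    rw [← integral_gaussianReal_indicator_lt_abs hv0.ne' hc, ← hZ,
      integral_map hZm ((measurable_abs.sub_const c).indicator hS).aestronglyMeasurable]
    congr 1 with ω
    by_cases hω : c < |Z ω| <;> simp [hω]
  have hden : (P {ω | |Z ω| > c}).toReal = 2 * ∫ x in Ioi c, gaussianPDFReal 0 v x := by
    have h := integral_gaussianReal_indicator_lt_abs hv0.ne' hc fun _ => 1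
    change (P (Z ⁻¹' {x | c < |x|})).toReal = _
    rw [← Measure.map_apply_of_aemeasurable hZm hS, hZ, ← measureReal_def,
      ← integral_indicator_one hS]
    simp only [one_mul] at h
    exact h
  rw [hnum, hden]
  have hT : 0 ≤ ∫ x in Ioi c, gaussianPDFReal 0 v x := integral_nonneg (gaussianPDFReal_nonneg 0 v)
  exact div_le_one_of_le₀
    (by linarith [integral_Ioi_sub_mul_gaussianPDFReal_le hc (by linarith)]) (by linarith)
end

section
/- Let Z be a real-valued random variable whose law is the Gaussian measure N(0, v) with 0 < v ≤ 1, and let c ≥ 0.exThen E[max(|Z| − c, 0)] ≤ P(|Z| > c). -/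
/-!
Both sides fold onto the half-line by symmetry of the density `φ` of `N(0, v)`: the left side is
`2 ∫_c^∞ (t - c) φ(t) dt` and the right side is `2 ∫_c^∞ φ(t) dt`. Since `t φ(t) = -v φ'(t)`, the
first integral equals `v φ(c) - c ∫_c^∞ φ`, so the claim is the Mills-type bound
`v φ(c) ≤ (c + 1) ∫_c^∞ φ`. For `v ≤ 1` this follows because the derivative of `-v φ(x) / (x + 1)`,
namely `φ(x) (x (x + 1) + v) / (x + 1)²`, is at most `φ(x)` on `[c, ∞)`.
-/

open MeasureTheory ProbabilityTheory Real Set Filter Topology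
open scoped NNReal

lemma hasDerivAt_gaussianPDFReal (μ : ℝ) (v : ℝ≥0) (x : ℝ) :
    HasDerivAt (gaussianPDFReal μ v) (-((x - μ) / v) * gaussianPDFReal μ v x) x := by
  have h : HasDerivAt (fun y => -(y - μ) ^ 2 / (2 * (v : ℝ))) (-((x - μ) / v)) x := by
    refine ((((hasDerivAt_id' x).sub_const μ).fun_pow 2).fun_neg.div_const
      (2 * (v : ℝ))).congr_deriv ?_
    ring
  rw [gaussianPDFReal_def]
  exact (h.exp.const_mul (√(2 * π * v))⁻¹).congr_deriv (by ring)

lemma tendsto_gaussianPDFReal_atTop (μ : ℝ) (v : ℝ≥0) :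
    Tendsto (gaussianPDFReal μ v) atTop (𝓝 0) := by
  rcases eq_or_ne v 0 with rfl | hv
  · rw [gaussianPDFReal_zero_var]; exact tendsto_const_nhds
  have h : Tendsto (fun x => -(x - μ) ^ 2 / (2 * (v : ℝ))) atTop atBot :=
    (tendsto_neg_atTop_atBot.comp ((tendsto_pow_atTop two_ne_zero).comp
      (tendsto_atTop_add_const_right _ (-μ) tendsto_id))).atBot_div_const (by positivity)
  rw [gaussianPDFReal_def]
  simpa using (tendsto_exp_atBot.comp h).const_mul (√(2 * π * v))⁻¹

lemma integrable_gaussianPDFReal_mul_self (v : ℝ≥0) :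
    Integrable fun x => gaussianPDFReal 0 v x * x := by
  rcases eq_or_ne v 0 with rfl | hv
  · simp [gaussianPDFReal_zero_var]
  refine ((integrable_mul_exp_neg_mul_sq (b := (2 * (v : ℝ))⁻¹) (by positivity)).const_mul
    (√(2 * π * v))⁻¹).congr (ae_of_all _ fun x => ?_)
  simp only [gaussianPDFReal_def]
  ring_nf

lemma integral_Ioi_gaussianPDFReal_mul_self (v : ℝ≥0) (c : ℝ) :
    ∫ t in Ioi c, gaussianPDFReal 0 v t * t = v * gaussianPDFReal 0 v c := by
  rcases eq_or_ne v 0 with rfl | hv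
  · simp [gaussianPDFReal_zero_var]
  have hderiv : ∀ x ∈ Ici c, HasDerivAt (fun y => -(v * gaussianPDFReal 0 v y))
      (gaussianPDFReal 0 v x * x) x := fun x _ =>
    (((hasDerivAt_gaussianPDFReal 0 v x).const_mul (v : ℝ)).fun_neg).congr_deriv
      (by rw [sub_zero]; field_simp)
  rw [integral_Ioi_of_hasDerivAt_of_tendsto' hderiv
    (integrable_gaussianPDFReal_mul_self v).integrableOn
    (by simpa using ((tendsto_gaussianPDFReal_atTop 0 v).const_mul (v : ℝ)).neg)]
  ring

lemma mul_gaussianPDFReal_le_mul_integral_Ioi {v : ℝ≥0} (hv : v ≠ 0) (hv1 : (v : ℝ) ≤ 1)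
    {c : ℝ} (hc : 0 ≤ c) :
    v * gaussianPDFReal 0 v c ≤ (c + 1) * ∫ t in Ioi c, gaussianPDFReal 0 v t := by
  set φ := gaussianPDFReal 0 v
  set F' : ℝ → ℝ := fun x => φ x * ((x * (x + 1) + v) / (x + 1) ^ 2)
  have hderiv : ∀ x ∈ Ici c, HasDerivAt (fun y => -(v * φ y) / (y + 1)) (F' x) x := by
    intro x hx
    have hx1 : x + 1 ≠ 0 := by linarith [hc.trans hx.out]
    refine ((((hasDerivAt_gaussianPDFReal 0 v x).const_mul (v : ℝ)).fun_neg).div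
      ((hasDerivAt_id' x).add_const 1) hx1).congr_deriv ?_
    simp only [F', φ, sub_zero]
    field_simp
    ring
  have hF'_nonneg : ∀ x ∈ Ioi c, 0 ≤ F' x := fun x hx => by
    have hx0 : 0 ≤ x := hc.trans hx.out.le
    exact mul_nonneg (gaussianPDFReal_nonneg 0 v x) (by positivity)
  have hF'_le : ∀ x ∈ Ioi c, F' x ≤ φ x := fun x hx => by
    have hx0 : 0 ≤ x := hc.trans hx.out.le
    refine mul_le_of_le_one_right (gaussianPDFReal_nonneg 0 v x)
      ((div_le_one (by positivity)).2 ?_)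
    nlinarith
  have htendsto : Tendsto (fun y => -(v * φ y) / (y + 1)) atTop (𝓝 0) := by
    simpa using ((tendsto_gaussianPDFReal_atTop 0 v).const_mul (v : ℝ)).neg.div_atTop
      (tendsto_atTop_add_const_right _ 1 tendsto_id)
  have hint := integral_Ioi_of_hasDerivAt_of_nonneg' hderiv hF'_nonneg htendsto
  have hmono : ∫ x in Ioi c, F' x ≤ ∫ x in Ioi c, φ x :=
    setIntegral_mono_on (integrableOn_Ioi_deriv_of_nonneg' hderiv hF'_nonneg htendsto)
      (integrable_gaussianPDFReal 0 v).integrableOn measurableSet_Ioi hF'_le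
  rw [hint, zero_sub, neg_div, neg_neg, div_le_iff₀ (by positivity)] at hmono
  linarith

lemma integral_Ioi_gaussianPDFReal_mul_sub_le {v : ℝ≥0} (hv : v ≠ 0) (hv1 : (v : ℝ) ≤ 1)
    {c : ℝ} (hc : 0 ≤ c) :
    ∫ t in Ioi c, gaussianPDFReal 0 v t * (t - c) ≤ ∫ t in Ioi c, gaussianPDFReal 0 v t := by
  have hsplit : ∫ t in Ioi c, gaussianPDFReal 0 v t * (t - c)
      = (∫ t in Ioi c, gaussianPDFReal 0 v t * t) - (∫ t in Ioi c, gaussianPDFReal 0 v t) * c := by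
    simp_rw [mul_sub]
    rw [integral_sub (integrable_gaussianPDFReal_mul_self v).integrableOn
      ((integrable_gaussianPDFReal 0 v).integrableOn.mul_const c), integral_mul_const]
  rw [hsplit, integral_Ioi_gaussianPDFReal_mul_self]
  linarith [mul_gaussianPDFReal_le_mul_integral_Ioi hv hv1 hc]

lemma integral_comp_abs_gaussianReal {v : ℝ≥0} (hv : v ≠ 0) (f : ℝ → ℝ) :
    ∫ x, f |x| ∂gaussianReal 0 v = 2 * ∫ t in Ioi 0, gaussianPDFReal 0 v t * f t := by
  rw [integral_gaussianReal_eq_integral_smul hv,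
    ← integral_comp_abs (f := fun t => gaussianPDFReal 0 v t * f t)]
  congr with x
  simp [gaussianPDFReal_def, sq_abs]

lemma integral_indicator_Ioi_comp_abs_gaussianReal {v : ℝ≥0} (hv : v ≠ 0) {c : ℝ} (hc : 0 ≤ c)
    (f : ℝ → ℝ) :
    ∫ x, (Ioi c).indicator f |x| ∂gaussianReal 0 v
      = 2 * ∫ t in Ioi c, gaussianPDFReal 0 v t * f t := by
  simp_rw [integral_comp_abs_gaussianReal hv, ← indicator_mul_right,
    setIntegral_indicator measurableSet_Ioi, Ioi_inter_Ioi, max_eq_right hc]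

theorem gaussian_expected_positive_overshoot_le_prob_general
    {Ω : Type*} [MeasurableSpace Ω] (P : Measure Ω)
    (Z : Ω → ℝ) (v : NNReal) (hv0 : 0 < v) (hv1 : (v : ℝ) ≤ 1)
    (hZ : Measure.map Z P = gaussianReal 0 v) (c : ℝ) (hc : 0 ≤ c) :
    (∫ ω, max (|Z ω| - c) 0 ∂P) ≤ (P {ω | |Z ω| > c}).toReal := by
  have hlaw : HasLaw Z (gaussianReal 0 v) P :=
    ⟨.of_map_ne_zero (hZ ▸ IsProbabilityMeasure.ne_zero _), hZ⟩
  have hpos_part : ∀ x : ℝ, max (|x| - c) 0 = (Ioi c).indicator (fun t => t - c) |x| := by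
    intro x
    by_cases hx : c < |x|
    · simp [hx, hx.le]
    · simp [hx, not_lt.1 hx]
  calc ∫ ω, max (|Z ω| - c) 0 ∂P
      = ∫ x, (Ioi c).indicator (fun t => t - c) |x| ∂gaussianReal 0 v := by
        simp_rw [← hpos_part]
        exact hlaw.integral_comp (f := fun x => max (|x| - c) 0) (by fun_prop)
    _ = 2 * ∫ t in Ioi c, gaussianPDFReal 0 v t * (t - c) :=
        integral_indicator_Ioi_comp_abs_gaussianReal hv0.ne' hc _
    _ ≤ 2 * ∫ t in Ioi c, gaussianPDFReal 0 v t * 1 := by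
        simpa using integral_Ioi_gaussianPDFReal_mul_sub_le hv0.ne' hv1 hc
    _ = ∫ x, (Ioi c).indicator 1 |x| ∂gaussianReal 0 v :=
        (integral_indicator_Ioi_comp_abs_gaussianReal hv0.ne' hc _).symm
    _ = (P {ω | |Z ω| > c}).toReal := by
        have hS : MeasurableSet {x : ℝ | |x| > c} :=
          measurableSet_lt measurable_const measurable_abs
        rw [← measureReal_def, hlaw.measureReal_eq hS, ← integral_indicator_one hS]
        rfl

/-- Step inside the proof of Lemma 2 of the paper: the expected positive part of the
overshoot of a zero-mean Gaussian with variance at most 1 beyond a nonnegative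
threshold is at most the probability of exceeding the threshold in absolute value. -/
theorem gaussian_expected_positive_overshoot_le_prob
    {Ω : Type*} [MeasurableSpace Ω] (P : Measure Ω) [IsProbabilityMeasure P]
    (Z : Ω → ℝ) (v : NNReal) (hv0 : 0 < v) (hv1 : (v : ℝ) ≤ 1)
    (hZ : Measure.map Z P = gaussianReal 0 v) (c : ℝ) (hc : 0 ≤ c) :
    (∫ ω, max (|Z ω| - c) 0 ∂P) ≤ (P {ω | |Z ω| > c}).toReal :=
  gaussian_expected_positive_overshoot_le_prob_general P Z v hv0 hv1 hZ c hc
end
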